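/- Let {X_n} be the single-death chain with immigration on ℤ⁺ (P_{0j} = β_j, P_{i,i−1} = p_i, P_{i0} = γ_i for i ≥ 2, P_{ii} = remainder). If inf_{i ≥ 2}(p_i + γ_i) = 0, then {X_n} is not strongly ergodic: sup_i E_i τ_A^+ = ∞ for A = {0, 1}. -/

import Mathlib

open ENNReal Set

/-- One-step transition matrix of the single-death chain with immigration on `ℤ⁺`. -/
noncomputable def Pmat (β p γ : ℕ → ℝ) (i j : ℕ) : ℝ :=
  if i = 0 then β j
  else if j = i - 1 then p i
  else if j = 0 then (if 2 ≤ i then γ i else 0)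
  else if j = i then 1 - p i - (if 2 ≤ i then γ i else 0)
  else 0

/-- `retN Q A n i`: probability, starting from `i`, that the first return time to `A`
equals `n + 1`.  Hence `∑' n, (n+1) * retN Q A n i = E_i[τ_A^+]` for a recurrent chain. -/
noncomputable def retN (Q : ℕ → ℕ → ℝ≥0∞) (A : Set ℕ) : ℕ → ℕ → ℝ≥0∞
  | 0 => fun i => ∑' j, A.indicator (Q i) j
  | (n + 1) => fun i => ∑' j, Aᶜ.indicator (fun k => Q i k * retN Q A n k) j

lemma Pmat_eq (β p γ : ℕ → ℝ) {i : ℕ} (hi : 2 ≤ i) (j : ℕ) :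
    Pmat β p γ i j =
      if j = i - 1 then p i else if j = 0 then γ i
      else if j = i then 1 - p i - γ i else 0 := by
  have : ¬ (i = 0) := by omega
  simp [Pmat, this, hi]

lemma Pmat_zero' (β p γ : ℕ → ℝ) {i : ℕ} (hi : 2 ≤ i) {j : ℕ}
    (h1 : j ≠ 0) (h2 : j ≠ i - 1) (h3 : j ≠ i) : Pmat β p γ i j = 0 := by
  rw [Pmat_eq β p γ hi, if_neg h2, if_neg h1, if_neg h3]

lemma rowsum (β p γ : ℕ → ℝ)
    (hβ : ∀ j, 0 ≤ β j) (hβsum : ∑' j, β j = 1)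
    (hp : ∀ i, 0 ≤ p i) (hγ : ∀ i, 0 ≤ γ i)
    (hpγ : ∀ i, 2 ≤ i → 0 < γ i + p i ∧ γ i + p i ≤ 1)
    (hp1 : 0 < p 1 ∧ p 1 ≤ 1) (j : ℕ) :
    ∑' k, ENNReal.ofReal (Pmat β p γ j k) = 1 := by
  rcases Nat.lt_or_ge j 2 with hj | hj
  · interval_cases j
    · -- j = 0
      have hs : Summable β := by
        by_contra h
        rw [tsum_eq_zero_of_not_summable h] at hβsum; norm_num at hβsum
      have hP : ∀ k, Pmat β p γ 0 k = β k := fun k => by simp [Pmat]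
      simp only [hP]
      rw [← ENNReal.ofReal_tsum_of_nonneg hβ hs, hβsum, ENNReal.ofReal_one]
    · -- j = 1
      rw [tsum_eq_sum (s := {0, 1}) ?side]
      · have h1 : Pmat β p γ 1 0 = p 1 := by simp [Pmat]
        have h2 : Pmat β p γ 1 1 = 1 - p 1 := by norm_num [Pmat]
        rw [Finset.sum_pair (by norm_num), h1, h2,
          ← ENNReal.ofReal_add (hp 1) (by linarith [hp1.2])]
        norm_num
      · intro b hb
        simp only [Finset.mem_insert, Finset.mem_singleton] at hb
        push_neg at hb
        have : Pmat β p γ 1 b = 0 := by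
          have e1 : ¬ ((1:ℕ) = 0) := by omega
          rw [Pmat, if_neg e1, if_neg (by omega), if_neg hb.1, if_neg hb.2]
        simp [this]
  · -- j ≥ 2
    rw [tsum_eq_sum (s := {0, j-1, j}) ?side2]
    · have e0 : Pmat β p γ j 0 = γ j := by
        rw [Pmat_eq β p γ hj, if_neg (by omega), if_pos rfl]
      have e1 : Pmat β p γ j (j-1) = p j := by rw [Pmat_eq β p γ hj, if_pos rfl]
      have e2 : Pmat β p γ j j = 1 - p j - γ j := by
        rw [Pmat_eq β p γ hj, if_neg (by omega), if_neg (by omega), if_pos rfl]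
      have hd1 : (0:ℕ) ≠ j - 1 := by omega
      have hd2 : (0:ℕ) ≠ j := by omega
      have hd3 : j - 1 ≠ j := by omega
      rw [Finset.sum_insert (by simp [hd1, hd2]),
        Finset.sum_pair hd3, e0, e1, e2]
      have h1 := (hpγ j hj).1
      have h2 := (hpγ j hj).2
      rw [← ENNReal.ofReal_add (hp j) (by linarith),
        ← ENNReal.ofReal_add (hγ j) (by linarith [hp j])]
      rw [show γ j + (p j + (1 - p j - γ j)) = 1 by ring, ENNReal.ofReal_one]
    · intro b hb
      simp only [Finset.mem_insert, Finset.mem_singleton] at hb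
      push_neg at hb
      rw [Pmat_zero' β p γ hj hb.1 hb.2.1 hb.2.2]
      simp

noncomputable def P1aux (p : ℕ → ℝ) (i : ℕ) : ℝ≥0∞ :=
  if 3 ≤ i then ENNReal.ofReal (p i) else 0

section RET2
variable (β p γ : ℕ → ℝ)
local notation "Q" => fun i j => ENNReal.ofReal (Pmat β p γ i j)
local notation "A" => ({0, 1} : Set ℕ)

lemma retN_zero_eq {i : ℕ} (hi : 2 ≤ i) :
    retN Q A 0 i + P1aux p i = ENNReal.ofReal (γ i) + ENNReal.ofReal (p i) := by
  have h : retN Q A 0 i = ∑' j, (A).indicator (Q i) j := rfl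
  rw [h, tsum_eq_sum (s := {0, 1}) ?side]
  · rw [Finset.sum_pair (by norm_num)]
    rw [Set.indicator_of_mem (by simp) (Q i), Set.indicator_of_mem (by simp) (Q i)]
    beta_reduce
    have e0 : Pmat β p γ i 0 = γ i := by
      rw [Pmat_eq β p γ hi, if_neg (by omega), if_pos rfl]
    rcases Nat.lt_or_ge i 3 with h3 | h3
    · have hi2 : i = 2 := by omega
      have e1 : Pmat β p γ i 1 = p i := by
        rw [Pmat_eq β p γ hi, if_pos (by omega)]
      rw [e0, e1, P1aux, if_neg (by omega : ¬ 3 ≤ i), add_zero]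
    · have e1 : Pmat β p γ i 1 = 0 := by
        exact Pmat_zero' β p γ hi (by omega) (by omega) (by omega)
      rw [e0, e1, P1aux, if_pos h3, ENNReal.ofReal_zero, add_zero]
  · intro b hb
    simp only [Finset.mem_insert, Finset.mem_singleton] at hb
    push_neg at hb
    exact Set.indicator_of_notMem (by simp [hb.1, hb.2]) _

lemma retN_succ_eq {i : ℕ} (hi : 2 ≤ i) (n : ℕ) :
    retN Q A (n+1) i = P1aux p i * retN Q A n (i-1)
      + ENNReal.ofReal (1 - p i - γ i) * retN Q A n i := by
  have h : retN Q A (n+1) i = ∑' j, (A)ᶜ.indicator (fun k => Q i k * retN Q A n k) j := rfl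
  rw [h, tsum_eq_sum (s := {i-1, i}) ?side]
  · rw [Finset.sum_pair (by omega)]
    have ei : Pmat β p γ i i = 1 - p i - γ i := by
      rw [Pmat_eq β p γ hi, if_neg (by omega), if_neg (by omega), if_pos rfl]
    have hiA : i ∈ (A)ᶜ := by simp; omega
    rw [Set.indicator_of_mem hiA]
    beta_reduce
    rw [ei]
    congr 1
    rcases Nat.lt_or_ge i 3 with h3 | h3
    · have : i - 1 = 1 := by omega
      rw [Set.indicator_of_notMem (by simp [this]), P1aux, if_neg (by omega : ¬ 3 ≤ i), zero_mul]
    · have e1 : Pmat β p γ i (i-1) = p i := by rw [Pmat_eq β p γ hi, if_pos rfl]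
      rw [Set.indicator_of_mem (by simp; omega), e1, P1aux, if_pos h3]
  · intro b hb
    simp only [Finset.mem_insert, Finset.mem_singleton] at hb
    push_neg at hb
    rcases Nat.lt_or_ge b 2 with hb2 | hb2
    · exact Set.indicator_of_notMem (by simp; omega) _
    · rw [Set.indicator_of_mem (by simp; omega)]
      beta_reduce
      rw [Pmat_zero' β p γ hi (by omega) hb.1 hb.2]
      simp




lemma partial_le_one
    (hβ : ∀ j, 0 ≤ β j) (hβsum : ∑' j, β j = 1)
    (hp : ∀ i, 0 ≤ p i) (hγ : ∀ i, 0 ≤ γ i)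
    (hpγ : ∀ i, 2 ≤ i → 0 < γ i + p i ∧ γ i + p i ≤ 1)
    (hp1 : 0 < p 1 ∧ p 1 ≤ 1) :
    ∀ m j, ∑ n ∈ Finset.range (m+1), retN Q A n j ≤ 1 := by
  intro m
  induction m with
  | zero =>
    intro j
    simp only [zero_add, Finset.sum_range_one]
    calc retN Q A 0 j = ∑' k, (A).indicator (Q j) k := rfl
      _ ≤ ∑' k, Q j k := ENNReal.tsum_le_tsum fun k => Set.indicator_le_self _ _ _
      _ = 1 := rowsum β p γ hβ hβsum hp hγ hpγ hp1 j
  | succ m ih =>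
    intro j
    rw [Finset.sum_range_succ']
    have h1 : ∑ n ∈ Finset.range (m+1), retN Q A (n+1) j
        = ∑' k, (A)ᶜ.indicator (fun k => Q j k * ∑ n ∈ Finset.range (m+1), retN Q A n k) k := by
      have hr : ∀ n, retN Q A (n+1) j
          = ∑' k, (A)ᶜ.indicator (fun k => Q j k * retN Q A n k) k := fun n => rfl
      simp only [hr]
      rw [← Summable.tsum_finsetSum (fun n _ => ENNReal.summable)]
      congr 1
      funext k
      by_cases hk : k ∈ (A)ᶜ
      · simp only [Set.indicator_of_mem hk, Finset.mul_sum]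
      · simp only [Set.indicator_of_notMem hk, Finset.sum_const_zero]
    rw [h1]
    have h0 : retN Q A 0 j = ∑' k, (A).indicator (Q j) k := rfl
    rw [h0]
    rw [add_comm, ← ENNReal.tsum_add]
    calc ∑' k, ((A).indicator (Q j) k
          + (A)ᶜ.indicator (fun k => Q j k * ∑ n ∈ Finset.range (m+1), retN Q A n k) k)
        ≤ ∑' k, ((A).indicator (Q j) k + (A)ᶜ.indicator (Q j) k) := by
          refine ENNReal.tsum_le_tsum fun k => add_le_add le_rfl ?_
          refine Set.indicator_le_indicator ?_
          calc Q j k * ∑ n ∈ Finset.range (m+1), retN Q A n k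
              ≤ Q j k * 1 := mul_le_mul_right (ih k) _
            _ = Q j k := mul_one _
      _ = ∑' k, Q j k := by
          congr 1; funext k
          exact Set.indicator_self_add_compl_apply A (Q j) k
      _ = 1 := rowsum β p γ hβ hβsum hp hγ hpγ hp1 j

lemma Lsum
    (hβ : ∀ j, 0 ≤ β j) (hβsum : ∑' j, β j = 1)
    (hp : ∀ i, 0 ≤ p i) (hγ : ∀ i, 0 ≤ γ i)
    (hpγ : ∀ i, 2 ≤ i → 0 < γ i + p i ∧ γ i + p i ≤ 1)
    (hp1 : 0 < p 1 ∧ p 1 ≤ 1) :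
    ∀ i, 2 ≤ i → (∑' n, retN Q A n i) = 1 := by
  have key : ∀ i : ℕ, 2 ≤ i →
      P1aux p i * (∑' n, retN Q A n (i-1)) = P1aux p i →
      (∑' n, retN Q A n i) = 1 := by
    intro i hi hP1
    have ha0 : 0 < p i + γ i := by have := (hpγ i hi).1; linarith
    have ha1 : p i + γ i ≤ 1 := by have := (hpγ i hi).2; linarith
    have hL1 : (∑' n, retN Q A n i) ≤ 1 := by
      refine ENNReal.tsum_le_of_sum_range_le ?_
      intro n
      cases n with
      | zero => simp
      | succ m => exact partial_le_one β p γ hβ hβsum hp hγ hpγ hp1 m i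
    have hsplit : retN Q A 0 i + ∑' n, retN Q A (n+1) i = ∑' n, retN Q A n i := by
      have h := Summable.sum_add_tsum_nat_add' (f := fun n => retN Q A n i) (k := 1)
        ENNReal.summable
      simpa using h
    have h2 : ∑' n, retN Q A (n+1) i
        = P1aux p i * (∑' n, retN Q A n (i-1))
          + ENNReal.ofReal (1 - p i - γ i) * (∑' n, retN Q A n i) := by
      have hr : ∀ n, retN Q A (n+1) i = P1aux p i * retN Q A n (i-1)
          + ENNReal.ofReal (1 - p i - γ i) * retN Q A n i :=
        retN_succ_eq β p γ hi
      simp only [hr]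
      rw [ENNReal.tsum_add, ENNReal.tsum_mul_left, ENNReal.tsum_mul_left]
    set L := ∑' n, retN Q A n i with hLdef
    set qq := ENNReal.ofReal (1 - p i - γ i) with hqq
    have heq : L = ENNReal.ofReal (γ i) + ENNReal.ofReal (p i) + qq * L := by
      conv_lhs => rw [← hsplit]
      rw [h2, hP1, ← add_assoc, retN_zero_eq β p γ hi]
    have hc : ENNReal.ofReal (γ i) + ENNReal.ofReal (p i)
        = ENNReal.ofReal (p i + γ i) := by
      rw [← ENNReal.ofReal_add (hγ i) (hp i)]; ring_nf
    have hqt : qq * L ≠ ⊤ := by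
      refine ne_top_of_le_ne_top (by norm_num : (1:ℝ≥0∞) ≠ ⊤) ?_
      calc qq * L ≤ 1 * 1 := by
            refine mul_le_mul' ?_ hL1
            rw [hqq, ← ENNReal.ofReal_one]
            exact ENNReal.ofReal_le_ofReal (by linarith)
        _ = 1 := by norm_num
    have hsub : L - qq * L = ENNReal.ofReal (p i + γ i) := by
      nth_rewrite 1 [heq]
      rw [hc]; exact ENNReal.add_sub_cancel_right hqt
    have hfac : (1 - qq) * L = ENNReal.ofReal (p i + γ i) := by
      rw [ENNReal.sub_mul (fun _ _ => ne_top_of_le_ne_top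
        (by norm_num : (1:ℝ≥0∞) ≠ ⊤) hL1), one_mul]
      exact hsub
    have h1q : (1:ℝ≥0∞) - qq = ENNReal.ofReal (p i + γ i) := by
      rw [hqq, ← ENNReal.ofReal_one, ← ENNReal.ofReal_sub _ (by linarith)]
      congr 1; ring
    rw [h1q] at hfac
    have hne : ENNReal.ofReal (p i + γ i) ≠ 0 := by
      simp [ENNReal.ofReal_eq_zero]; linarith
    exact (ENNReal.mul_right_inj hne ENNReal.ofReal_ne_top).1
      (by rw [mul_one]; exact hfac)
  intro i hi
  induction i, hi using Nat.le_induction with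
  | base =>
    refine key 2 le_rfl ?_
    rw [P1aux, if_neg (by omega)]
    simp
  | succ n hn ih =>
    refine key (n+1) (by omega) ?_
    have : n + 1 - 1 = n := by omega
    rw [this, ih, mul_one]

lemma Tbound
    (hβ : ∀ j, 0 ≤ β j) (hβsum : ∑' j, β j = 1)
    (hp : ∀ i, 0 ≤ p i) (hγ : ∀ i, 0 ≤ γ i)
    (hpγ : ∀ i, 2 ≤ i → 0 < γ i + p i ∧ γ i + p i ≤ 1)
    (hp1 : 0 < p 1 ∧ p 1 ≤ 1) {i : ℕ} (hi : 2 ≤ i) :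
    ∀ m, (∑ n ∈ Finset.range (m+1), retN Q A n i)
      + (ENNReal.ofReal (1 - p i - γ i))^(m+1) ≤ 1 := by
  have ha0 : 0 < p i + γ i := by have := (hpγ i hi).1; linarith
  have ha1 : p i + γ i ≤ 1 := by have := (hpγ i hi).2; linarith
  set qq := ENNReal.ofReal (1 - p i - γ i) with hqq
  have hone : retN Q A 0 i + P1aux p i + qq = 1 := by
    rw [retN_zero_eq β p γ hi, hqq,
      ← ENNReal.ofReal_add (hγ i) (hp i), ← ENNReal.ofReal_add (by linarith) (by linarith)]
    rw [show γ i + p i + (1 - p i - γ i) = 1 by ring, ENNReal.ofReal_one]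
  intro m
  induction m with
  | zero =>
    simp only [zero_add, Finset.sum_range_one, pow_one]
    calc retN Q A 0 i + qq ≤ retN Q A 0 i + P1aux p i + qq := by
          gcongr
          exact le_add_right le_rfl
      _ = 1 := hone
  | succ m ih =>
    rw [Finset.sum_range_succ']
    have h2 : ∑ n ∈ Finset.range (m+1), retN Q A (n+1) i
        = P1aux p i * (∑ n ∈ Finset.range (m+1), retN Q A n (i-1))
          + qq * (∑ n ∈ Finset.range (m+1), retN Q A n i) := by
      simp only [retN_succ_eq β p γ hi]
      rw [Finset.sum_add_distrib, ← Finset.mul_sum, ← Finset.mul_sum]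
    rw [h2]
    calc P1aux p i * (∑ n ∈ Finset.range (m+1), retN Q A n (i-1))
          + qq * (∑ n ∈ Finset.range (m+1), retN Q A n i)
          + retN Q A 0 i + qq^(m+2)
        = retN Q A 0 i + P1aux p i * (∑ n ∈ Finset.range (m+1), retN Q A n (i-1))
          + qq * ((∑ n ∈ Finset.range (m+1), retN Q A n i) + qq^(m+1)) := by ring
      _ ≤ retN Q A 0 i + P1aux p i * 1 + qq * 1 := by
          gcongr
          exact partial_le_one β p γ hβ hβsum hp hγ hpγ hp1 m (i-1)
      _ = retN Q A 0 i + P1aux p i + qq := by rw [mul_one, mul_one]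
      _ = 1 := hone

end RET2


/-- For the single-death chain with immigration, if
`inf_{i ≥ 2} (p_i + γ_i) = 0`, then the chain is not strongly ergodic:
`sup_i E_i[τ_A^+] = ∞` for `A = {0, 1}`. -/
theorem single_death_chain_not_strongly_ergodic
    (β p γ : ℕ → ℝ)
    (hβ : ∀ j, 0 ≤ β j) (hβsum : ∑' j, β j = 1)
    (hp : ∀ i, 0 ≤ p i) (hγ : ∀ i, 0 ≤ γ i)
    (hpγ : ∀ i, 2 ≤ i → 0 < γ i + p i ∧ γ i + p i ≤ 1)
    (hp1 : 0 < p 1 ∧ p 1 ≤ 1)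
    (hinf : ∀ ε : ℝ, 0 < ε → ∃ i : ℕ, 2 ≤ i ∧ p i + γ i < ε) :
    (⨆ i : ℕ, ∑' n : ℕ, ((n : ℝ≥0∞) + 1) *
        retN (fun i j => ENNReal.ofReal (Pmat β p γ i j)) ({0, 1} : Set ℕ) n i) = ⊤ := by
  set Q := fun i j => ENNReal.ofReal (Pmat β p γ i j) with hQ
  set A := ({0, 1} : Set ℕ) with hA
  rw [eq_top_iff, ← ENNReal.iSup_natCast]
  refine iSup_le fun M => ?_
  set k : ℕ := 2 * M + 2 with hk
  have hkpos : 0 < k := by omega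
  obtain ⟨i, hi2, ha⟩ := hinf (1 / (2 * k)) (by positivity)
  have ha0 : 0 < p i + γ i := by have := (hpγ i hi2).1; linarith
  have ha1 : p i + γ i ≤ 1 := by have := (hpγ i hi2).2; linarith
  set qq := ENNReal.ofReal (1 - p i - γ i) with hqq
  -- Step 1: total mass 1
  have hL : (∑' n, retN Q A n i) = 1 := Lsum β p γ hβ hβsum hp hγ hpγ hp1 i hi2
  have hs : (∑ n ∈ Finset.range k, retN Q A n i) + (∑' n, retN Q A (n + k) i) = 1 := by
    rw [← hL]
    exact Summable.sum_add_tsum_nat_add' ENNReal.summable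
  -- Step 2: tail lower bound
  have htail : qq ^ k ≤ ∑' n, retN Q A (n + k) i := by
    have hT := Tbound β p γ hβ hβsum hp hγ hpγ hp1 hi2 (k - 1)
    rw [show k - 1 + 1 = k by omega] at hT
    rw [← hs] at hT
    have hfin : (∑ n ∈ Finset.range k, retN Q A n i) ≠ ⊤ := by
      refine ne_top_of_le_ne_top (by norm_num : (1:ℝ≥0∞) ≠ ⊤) ?_
      calc (∑ n ∈ Finset.range k, retN Q A n i) ≤
          (∑ n ∈ Finset.range k, retN Q A n i) + (∑' n, retN Q A (n + k) i) :=
            le_add_right le_rfl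
        _ = 1 := hs
    exact ENNReal.le_of_add_le_add_left hfin hT
  -- Step 3: expectation lower bound
  have hE : (k : ℝ≥0∞) * (∑' n, retN Q A (n + k) i)
      ≤ ∑' n : ℕ, ((n : ℝ≥0∞) + 1) * retN Q A n i := by
    have hsplit := Summable.sum_add_tsum_nat_add'
      (f := fun n => ((n : ℝ≥0∞) + 1) * retN Q A n i) (k := k) ENNReal.summable
    calc (k : ℝ≥0∞) * (∑' n, retN Q A (n + k) i)
        = ∑' n, (k : ℝ≥0∞) * retN Q A (n + k) i := ENNReal.tsum_mul_left.symm
      _ ≤ ∑' n, (((n + k : ℕ) : ℝ≥0∞) + 1) * retN Q A (n + k) i := by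
          refine ENNReal.tsum_le_tsum fun n => mul_le_mul_left ?_ _
          calc (k : ℝ≥0∞) ≤ ((n + k : ℕ) : ℝ≥0∞) := by
                exact_mod_cast Nat.le_add_left k n
            _ ≤ ((n + k : ℕ) : ℝ≥0∞) + 1 := le_add_right le_rfl
      _ ≤ ∑' n : ℕ, ((n : ℝ≥0∞) + 1) * retN Q A n i := by
          rw [← hsplit]
          exact le_add_self
  -- Step 4: numeric bound
  have hnum : (M : ℝ≥0∞) ≤ (k : ℝ≥0∞) * qq ^ k := by
    have hq12 : ENNReal.ofReal (1/2) ≤ qq ^ k := by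
      rw [hqq, ← ENNReal.ofReal_pow (by linarith)]
      refine ENNReal.ofReal_le_ofReal ?_
      have hpow : 1 + (k : ℝ) * (-(p i + γ i)) ≤ (1 + (-(p i + γ i))) ^ k :=
        one_add_mul_le_pow (by linarith) k
      have hkR : (0:ℝ) < (k:ℝ) := by positivity
      have hka : (k : ℝ) * (p i + γ i) ≤ 1/2 := by
        calc (k:ℝ) * (p i + γ i) ≤ (k:ℝ) * (1/(2*(k:ℝ))) := by nlinarith
          _ = 1/2 := by field_simp
      calc (1:ℝ)/2 = 1 - 1/2 := by ring
        _ ≤ 1 + (k : ℝ) * (-(p i + γ i)) := by nlinarith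
        _ ≤ (1 + (-(p i + γ i))) ^ k := hpow
        _ = (1 - p i - γ i) ^ k := by ring_nf
    calc (M : ℝ≥0∞) = ENNReal.ofReal M := by
          rw [ENNReal.ofReal_natCast]
      _ ≤ ENNReal.ofReal ((k : ℝ) * (1/2)) := by
          refine ENNReal.ofReal_le_ofReal ?_
          rw [hk]; push_cast; ring_nf; linarith
      _ = ENNReal.ofReal (k : ℝ) * ENNReal.ofReal (1/2) := by
          rw [ENNReal.ofReal_mul (by positivity)]
      _ = (k : ℝ≥0∞) * ENNReal.ofReal (1/2) := by rw [ENNReal.ofReal_natCast]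
      _ ≤ (k : ℝ≥0∞) * qq ^ k := mul_le_mul_right hq12 _
  calc (M : ℝ≥0∞) ≤ (k : ℝ≥0∞) * qq ^ k := hnum
    _ ≤ (k : ℝ≥0∞) * (∑' n, retN Q A (n + k) i) := by
        exact mul_le_mul_right htail _
    _ ≤ ∑' n : ℕ, ((n : ℝ≥0∞) + 1) * retN Q A n i := hE
    _ ≤ ⨆ i : ℕ, ∑' n : ℕ, ((n : ℝ≥0∞) + 1) * retN Q A n i :=
        le_iSup (fun j : ℕ => ∑' n : ℕ, ((n : ℝ≥0∞) + 1) * retN Q A n j) i
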